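/- arXiv:1711.08258 — 2 statements merged into one kernel-verified Lean document; each statement's English description precedes it below -/
import Mathlib

section
/- Let D be a special polyhedra system, J ∈ Sing(D), and let J' ∈ H'_∞ be a stratum of the blow-up π_J(F), with K = π_J^#(J'). If T(Δ_K) = J, then J' is not a singular stratum of the characteristic transform Λ_J(D). -/
open scoped Pointwise

namespace RedSing

/-! ### Vectors and polyhedra.
A vector "in `ℝ^J`" is a function `ℕ → ℝ` supported on the finite set `J`. -/

abbrev Vec : Type := ℕ → ℝ

/-- The cone `ℝ_{≥0}^J` of nonnegative vectors supported on `J`. -/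
def suppCone (J : Finset ℕ) : Set Vec :=
  {σ | (∀ j, 0 ≤ σ j) ∧ ∀ j, j ∉ J → σ j = 0}

/-- Positive convex hull `[[A]] = convexHull (A + ℝ_{≥0}^J)`. -/
noncomputable def posHull (J : Finset ℕ) (A : Set Vec) : Set Vec :=
  convexHull ℝ (A + suppCone J)

/-- The lattice points `(1/d)·ℤ_{≥0}^J`. -/
def latticePts (J : Finset ℕ) (d : ℕ) : Set Vec :=
  {σ | σ ∈ suppCone J ∧ ∀ j, ∃ m : ℕ, σ j = (m : ℝ) / (d : ℝ)}

/-- `Δ ⊆ ℝ_{≥0}^J` is a characteristic polyhedron with denominator `d`. -/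
def IsCharPoly (J : Finset ℕ) (d : ℕ) (Δ : Set Vec) : Prop :=
  ∃ A, A ⊆ latticePts J d ∧ Δ = posHull J A

/-! ### Support fabrics -/

/-- A support fabric: a nonempty finite index set `I` together with a
downward-closed family `H` of subsets of `I` (the strata). -/
structure Fabric where
  I : Finset ℕ
  I_nonempty : I.Nonempty
  H : Set (Finset ℕ)
  mem_sub : ∀ J ∈ H, J ⊆ I
  downward : ∀ J ∈ H, ∀ J' ⊆ J, J' ∈ H

/-- Dimension of a support fabric: the maximal cardinality of a stratum. -/
noncomputable def Fabric.dim (F : Fabric) : ℕ :=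
  sSup {n | ∃ J ∈ F.H, J.card = n}

/-- The Zariski topology on finsets: the open sets are the downward-closed families;
subsets such as the strata set `H` carry the subspace topology. -/
instance zariskiTopology : TopologicalSpace (Finset ℕ) where
  IsOpen U := ∀ J ∈ U, ∀ J' ⊆ J, J' ∈ U
  isOpen_univ := fun J _ J' _ => Set.mem_univ J'
  isOpen_inter := fun s t hs ht J hJ J' hJ' => ⟨hs J hJ.1 J' hJ', ht J hJ.2 J' hJ'⟩
  isOpen_sUnion := fun S hS J hJ J' hJ' => by
    obtain ⟨t, htS, hJt⟩ := hJ
    exact ⟨t, htS, hS t htS J hJt J' hJ'⟩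

/-! ### Polyhedra systems -/

/-- A polyhedra system over a support fabric: a nonempty characteristic polyhedron
with denominator `d` for each stratum, compatible with the projections
(restriction of functions). -/
structure PolySys where
  F : Fabric
  d : ℕ
  d_pos : 0 < d
  Δ : Finset ℕ → Set Vec
  char : ∀ J ∈ F.H, IsCharPoly J d (Δ J)
  nonempty : ∀ J ∈ F.H, (Δ J).Nonempty
  compat : ∀ J₁ ∈ F.H, ∀ J₂ ∈ F.H, J₁ ⊆ J₂ →
    Δ J₁ = (fun σ => fun j => if j ∈ J₁ then σ j else 0) '' Δ J₂

/-- Contact exponent `δ(Δ) = min {|σ| : σ ∈ Δ}` (with the convention `δ = -1`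
for the empty index set). -/
noncomputable def contactExp (J : Finset ℕ) (Δ : Set Vec) : ℝ :=
  if J = (∅ : Finset ℕ) then -1 else sInf ((fun σ => ∑ j ∈ J, σ j) '' Δ)

/-- Singular locus: strata with contact exponent at least 1. -/
def Sing (D : PolySys) : Set (Finset ℕ) :=
  {J | J ∈ D.F.H ∧ 1 ≤ contactExp J (D.Δ J)}

/-- `D` is special: `δ(D) = max {δ(Δ_J)} = 1`. -/
def IsSpecial (D : PolySys) : Prop :=
  (∀ J ∈ D.F.H, contactExp J (D.Δ J) ≤ 1) ∧ ∃ J ∈ D.F.H, contactExp J (D.Δ J) = 1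

/-! ### Blow-ups and transforms -/

/-- The strata of the blow-up centered in `J`, with new index `inf` (playing `∞`). -/
def blowupH (H : Set (Finset ℕ)) (J : Finset ℕ) (inf : ℕ) : Set (Finset ℕ) :=
  {K | K ∈ H ∧ ¬ J ⊆ K} ∪
    {J' | ∃ K, (K ∈ H ∧ J ⊆ K) ∧ ∃ A, A ⊂ J ∧ J' = (K \ J) ∪ A ∪ {inf}}

/-- The map `π_J^#` from the strata of the blow-up to the strata of `F`. -/
def blowdown (J : Finset ℕ) (inf : ℕ) (J' : Finset ℕ) : Finset ℕ :=
  if inf ∈ J' then (J'.erase inf) ∪ J else J'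

/-- The map `λ_{J'} : ℝ^K → ℝ^{J'}`. -/
noncomputable def lamMap (J J' : Finset ℕ) (inf : ℕ) (σ : Vec) : Vec :=
  fun j => if j = inf then ∑ i ∈ J, σ i else if j ∈ J' then σ j else 0

/-- The indicator vector `e_{J',∞}` of the new index. -/
def eVec (inf : ℕ) : Vec := fun j => if j = inf then 1 else 0

/-- The polyhedron `Δ⁰_{J'}` of the total transform at a stratum `J'` of the blow-up. -/
noncomputable def totalΔ (D : PolySys) (J : Finset ℕ) (inf : ℕ) (J' : Finset ℕ) : Set Vec :=
  if inf ∈ J' then posHull J' (lamMap J J' inf '' D.Δ (blowdown J inf J'))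
  else D.Δ J'

/-- The polyhedron `Δ'_{J'} = Δ⁰_{J'} - e_{J',∞}` of the characteristic transform
(`e_{J',∞} = 0` when `∞ ∉ J'`). -/
noncomputable def charΔ (D : PolySys) (J : Finset ℕ) (inf : ℕ) (J' : Finset ℕ) : Set Vec :=
  if inf ∈ J' then
    (fun σ => σ - eVec inf) '' posHull J' (lamMap J J' inf '' D.Δ (blowdown J inf J'))
  else D.Δ J'

/-- `D'` is the total transform `Λ⁰_J(D)` of `D` centered in the nonempty stratum `J`,
with new index `inf`. -/
def IsTotalTransformAt (D D' : PolySys) (J : Finset ℕ) (inf : ℕ) : Prop :=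
  J ∈ D.F.H ∧ J ≠ ∅ ∧ D'.d = D.d ∧ inf ∉ D.F.I ∧
  D'.F.I = insert inf D.F.I ∧ D'.F.H = blowupH D.F.H J inf ∧
  ∀ J' ∈ D'.F.H, D'.Δ J' = totalΔ D J inf J'

/-- `D'` is a total transform of `D` centered in `J`. -/
def IsTotalTransform (D D' : PolySys) (J : Finset ℕ) : Prop :=
  ∃ inf, IsTotalTransformAt D D' J inf

/-- `D'` is the characteristic transform `Λ_J(D)` of `D` centered in the singular
stratum `J`, with new index `inf`. -/
def IsCharTransformAt (D D' : PolySys) (J : Finset ℕ) (inf : ℕ) : Prop :=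
  J ∈ Sing D ∧ D'.d = D.d ∧ inf ∉ D.F.I ∧
  D'.F.I = insert inf D.F.I ∧ D'.F.H = blowupH D.F.H J inf ∧
  ∀ J' ∈ D'.F.H, D'.Δ J' = charΔ D J inf J'

/-- `D'` is a characteristic transform of `D` centered in `J`. -/
def IsCharTransform (D D' : PolySys) (J : Finset ℕ) : Prop :=
  ∃ inf, IsCharTransformAt D D' J inf

/-- A reduction of singularities of `D`: a finite sequence of characteristic
transforms, each centered in a singular stratum of the previous system, ending
in a system with empty singular locus. -/
def HasReduction (D : PolySys) : Prop :=
  ∃ (k : ℕ) (seq : ℕ → PolySys), seq 0 = D ∧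
    (∀ i, i < k → ∃ J, IsCharTransform (seq i) (seq (i + 1)) J) ∧
    Sing (seq k) = ∅

/-! ### Strict tangent space and maximal contact -/

/-- Hironaka's strict tangent space `T(Δ)` of a polyhedron `Δ ⊆ ℝ_{≥0}^J`. -/
def strictTangent (J : Finset ℕ) (Δ : Set Vec) : Set ℕ :=
  {j | ∃ σ ∈ Δ, (∑ i ∈ J, σ i) = 1 ∧ σ j ≠ 0}

/-- The stratum `T` has maximal contact with the (special) system `D`. -/
def HasMaximalContact (D : PolySys) (T : Finset ℕ) : Prop :=
  T ∈ D.F.H ∧ ∀ J ∈ Sing D, (↑T : Set ℕ) ⊆ strictTangent J (D.Δ J)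

/-! ### Hironaka's projection from a stratum `T` -/

/-- Hironaka's projection `∇_J^T(σ) = σ|_{J∖T} / (1 - Σ_{j∈T} σ(j))`. -/
noncomputable def hironakaProj (T J : Finset ℕ) (σ : Vec) : Vec :=
  fun j => if j ∈ J \ T then σ j / (1 - ∑ i ∈ T, σ i) else 0

/-- The polyhedron `Δ^T_{J*} = ∇_J^T(Δ_J ∩ M_J^T)` of Hironaka's projection,
where `J = J* ∪ T`. -/
noncomputable def projΔ (D : PolySys) (T J' : Finset ℕ) : Set Vec :=
  hironakaProj T (J' ∪ T) '' {σ | σ ∈ D.Δ (J' ∪ T) ∧ (∑ i ∈ T, σ i) < 1}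

/-- The strata `H^T = {J ∖ T : T ⊆ J ∈ H}` of the projected fabric `F^T`. -/
def projH (F : Fabric) (T : Finset ℕ) : Set (Finset ℕ) :=
  {J' | ∃ J, (J ∈ F.H ∧ T ⊆ J) ∧ J' = J \ T}

/-- The singular locus of Hironaka's projection `D^T`. -/
def projSing (D : PolySys) (T : Finset ℕ) : Set (Finset ℕ) :=
  {J' | J' ∈ projH D.F T ∧ (projΔ D T J').Nonempty ∧ 1 ≤ contactExp J' (projΔ D T J')}

/-- `E` is Hironaka's projection `D^T` of `D` from the stratum `T`
(a polyhedra system over `F^T` with denominator `d!·d`). -/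
def IsHironakaProjection (D E : PolySys) (T : Finset ℕ) : Prop :=
  E.F.I = D.F.I \ T ∧ E.F.H = projH D.F T ∧ E.d = Nat.factorial D.d * D.d ∧
  ∀ J' ∈ E.F.H, E.Δ J' = projΔ D T J'

/-! ### Reduction `Red_C` of a system to a closed set `C` of strata -/

/-- The fabric `Red_C(F)`, with strata `H_C = ⋃_{J ∈ C} P(J)`. -/
def Fabric.red (F : Fabric) (C : Set (Finset ℕ)) : Fabric where
  I := F.I
  I_nonempty := F.I_nonempty
  H := {J' | ∃ J, (J ∈ C ∧ J ∈ F.H) ∧ J' ⊆ J}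
  mem_sub := by
    rintro J' ⟨J, ⟨_, hJH⟩, hsub⟩
    exact hsub.trans (F.mem_sub J hJH)
  downward := by
    rintro J' ⟨J, hJ, hsub⟩ J'' hsub'
    exact ⟨J, hJ, hsub'.trans hsub⟩

/-- The reduction `Red_C(D)` of a polyhedra system to a closed set `C ⊆ H`. -/
noncomputable def PolySys.red (D : PolySys) (C : Set (Finset ℕ)) : PolySys where
  F := D.F.red C
  d := D.d
  d_pos := D.d_pos
  Δ := D.Δ
  char := by
    rintro J ⟨K, ⟨_, hK⟩, hsub⟩
    exact D.char J (D.F.downward K hK J hsub)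
  nonempty := by
    rintro J ⟨K, ⟨_, hK⟩, hsub⟩
    exact D.nonempty J (D.F.downward K hK J hsub)
  compat := by
    rintro J₁ ⟨K₁, ⟨_, hK₁⟩, h₁⟩ J₂ ⟨K₂, ⟨_, hK₂⟩, h₂⟩ h12
    exact D.compat J₁ (D.F.downward K₁ hK₁ J₁ h₁) J₂ (D.F.downward K₂ hK₂ J₂ h₂) h12

/-- A special polyhedra system is consistent if for each connected component `C`
of its singular locus there is a stratum having maximal contact with `Red_C(D)`
(non-singular systems are consistent by convention). -/
def IsConsistent (D : PolySys) : Prop :=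
  ∀ x ∈ Sing D, ∃ T, HasMaximalContact (D.red (connectedComponentIn (Sing D) x)) T

/-! ### Fitting and Spivakovsky's invariant -/

/-- The fitting vector `w_Δ(j) = min {σ(j) : σ ∈ Δ}`. -/
noncomputable def fitVec (Δ : Set Vec) : Vec := fun j => sInf ((fun σ => σ j) '' Δ)

/-- The fitting `Δ̃ = Δ - w_Δ`. -/
noncomputable def fitting (Δ : Set Vec) : Set Vec := (fun σ => σ - fitVec Δ) '' Δ

/-- Spivakovsky's invariant `Spi_D = max {δ(Δ̃_J) : J ∈ Sing(D)}`. -/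
noncomputable def spi (D : PolySys) : ℝ :=
  sSup {x | ∃ J ∈ Sing D, contactExp J (fitting (D.Δ J)) = x}

/-- `S(D) = {J ∈ Sing(D) : δ(Δ̃_J) = Spi_D}`. -/
def SSet (D : PolySys) : Set (Finset ℕ) :=
  {J | J ∈ Sing D ∧ contactExp J (fitting (D.Δ J)) = spi D}

/-! ### Moderated transforms, normal crossings, quasi-ordinary systems -/

/-- The polyhedron of the `d`-moderated transform `Θ^d_J(N) = N(Λ_J(N/d))`
at a stratum `J'` of the blow-up. -/
noncomputable def modΔ (N : PolySys) (d : ℕ) (J : Finset ℕ) (inf : ℕ) (J' : Finset ℕ) :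
    Set Vec :=
  if inf ∈ J' then
    (fun σ => σ - (d : ℝ) • eVec inf) ''
      posHull J' (lamMap J J' inf '' N.Δ (blowdown J inf J'))
  else N.Δ J'

/-- `N'` is the `d`-moderated transform `Θ^d_J(N)` of the Newton polyhedra system `N`
centered in a stratum `J` with `δ(N_J) ≥ d`, with new index `inf`. -/
def IsModTransformAt (N N' : PolySys) (d : ℕ) (J : Finset ℕ) (inf : ℕ) : Prop :=
  N.d = 1 ∧ N'.d = 1 ∧ J ∈ N.F.H ∧ (d : ℝ) ≤ contactExp J (N.Δ J) ∧ inf ∉ N.F.I ∧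
  N'.F.I = insert inf N.F.I ∧ N'.F.H = blowupH N.F.H J inf ∧
  ∀ J' ∈ N'.F.H, N'.Δ J' = modΔ N d J inf J'

/-- `N'` is a `d`-moderated transform of `N` centered in `J`. -/
def IsModTransform (N N' : PolySys) (d : ℕ) (J : Finset ℕ) : Prop :=
  ∃ inf, IsModTransformAt N N' d J inf

/-- A Newton polyhedra system has normal crossings if each polyhedron has a
single vertex. -/
def HasNormalCrossings (D : PolySys) : Prop :=
  ∀ J ∈ D.F.H, ∃ σ, D.Δ J = posHull J {σ}

/-- `D` is Hironaka quasi-ordinary: each polyhedron over a singular stratum has a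
single vertex. -/
def IsQuasiOrdinary (D : PolySys) : Prop :=
  ∀ J ∈ Sing D, ∃ σ, D.Δ J = posHull J {σ}

/-! ### Lexicographic order on sequences of naturals -/

/-- Strict lexicographic order on sequences `ℕ → ℕ`. -/
def LexLt (φ ψ : ℕ → ℕ) : Prop := ∃ n, φ n < ψ n ∧ ∀ m < n, φ m = ψ m

/-- A weakly decreasing sequence of naturals. -/
def WeaklyDecr (φ : ℕ → ℕ) : Prop := ∀ n, φ (n + 1) ≤ φ n

/-! Write `J' = (K ∖ J) ∪ A ∪ {∞}` with `A ⊊ J` and pick `j₀ ∈ J ∖ A`. Since `j₀ ∈ T(Δ_K)`, some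
`σ ∈ Δ_K` has `|σ| = 1` and `σ(j₀) > 0`. Its image `λ_{J'}(σ) - e_{J',∞} ∈ Δ'_{J'}` has size
`|σ| + Σ_{j∈A} σ(j) - 1 = Σ_{j∈A} σ(j) < |σ| = 1`, so `δ(Δ'_{J'}) < 1`. -/

lemma suppCone_convex (J : Finset ℕ) : Convex ℝ (suppCone J) := by
  rintro σ ⟨hσ, hσJ⟩ τ ⟨hτ, hτJ⟩ a b ha hb -
  refine ⟨fun j => ?_, fun j hj => ?_⟩
  · simpa using add_nonneg (mul_nonneg ha (hσ j)) (mul_nonneg hb (hτ j))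
  · simp [hσJ j hj, hτJ j hj]

lemma posHull_subset_suppCone {J : Finset ℕ} {A : Set Vec} (hA : A ⊆ suppCone J) :
    posHull J A ⊆ suppCone J := by
  refine convexHull_min ?_ (suppCone_convex J)
  rintro _ ⟨a, ha, c, ⟨hc, hcJ⟩, rfl⟩
  refine ⟨fun j => add_nonneg ((hA ha).1 j) (hc j), fun j hj => ?_⟩
  simp [(hA ha).2 j hj, hcJ j hj]

lemma subset_posHull (J : Finset ℕ) (A : Set Vec) : A ⊆ posHull J A :=
  fun σ hσ => subset_convexHull ℝ _ ⟨σ, hσ, 0, ⟨fun _ => le_rfl, fun _ _ => rfl⟩, add_zero σ⟩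

lemma IsCharPoly.subset_suppCone {J : Finset ℕ} {d : ℕ} {Δ : Set Vec}
    (hΔ : IsCharPoly J d Δ) : Δ ⊆ suppCone J := by
  obtain ⟨A, hA, rfl⟩ := hΔ
  exact posHull_subset_suppCone fun σ hσ => (hA hσ).1

lemma contactExp_lt_one {J : Finset ℕ} {Δ : Set Vec} (hJ : J.Nonempty) {σ : Vec}
    (hσ : σ ∈ Δ) (hlt : ∑ j ∈ J, σ j < 1) : contactExp J Δ < 1 := by
  rw [contactExp, if_neg hJ.ne_empty]
  by_cases hbdd : BddBelow ((fun σ => ∑ j ∈ J, σ j) '' Δ)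
  · exact (csInf_le hbdd ⟨σ, hσ, rfl⟩).trans_lt hlt
  · rw [Real.sInf_of_not_bddBelow hbdd]
    exact one_pos

lemma exists_blowupH_eq_of_mem {F : Fabric} {J : Finset ℕ} {inf : ℕ} (hinfI : inf ∉ F.I)
    {J' : Finset ℕ} (hJ' : J' ∈ blowupH F.H J inf) (hinf : inf ∈ J') :
    ∃ K ∈ F.H, J ⊆ K ∧ ∃ A ⊂ J, J' = K \ J ∪ A ∪ {inf} := by
  rcases hJ' with ⟨hJ'H, -⟩ | ⟨K, ⟨hKH, hJK⟩, A, hAJ, rfl⟩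
  · exact absurd (F.mem_sub J' hJ'H hinf) hinfI
  · exact ⟨K, hKH, hJK, A, hAJ, rfl⟩

section BlowupStratum

variable {J K A : Finset ℕ} {inf : ℕ}

lemma erase_blowupStratum (hinfK : inf ∉ K) (hAK : A ⊆ K) :
    (K \ J ∪ A ∪ {inf}).erase inf = K \ J ∪ A := by
  rw [Finset.union_comm, ← Finset.insert_eq, Finset.erase_insert]
  exact fun h => hinfK (Finset.union_subset Finset.sdiff_subset hAK h)

lemma blowdown_blowupStratum (hinfK : inf ∉ K) (hJK : J ⊆ K) (hAJ : A ⊆ J) :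
    blowdown J inf (K \ J ∪ A ∪ {inf}) = K := by
  rw [blowdown, if_pos (by simp), erase_blowupStratum hinfK (hAJ.trans hJK),
    Finset.union_right_comm, Finset.sdiff_union_of_subset hJK, Finset.union_eq_left.mpr (hAJ.trans hJK)]

lemma sum_lamMap (J' : Finset ℕ) (hinf : inf ∈ J') (σ : Vec) :
    ∑ j ∈ J', lamMap J J' inf σ j = ∑ i ∈ J, σ i + ∑ j ∈ J'.erase inf, σ j := by
  rw [← Finset.add_sum_erase J' _ hinf]
  congr 1
  · simp [lamMap]
  · refine Finset.sum_congr rfl fun j hj => ?_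
    obtain ⟨hj, hjJ'⟩ := Finset.mem_erase.mp hj
    simp [lamMap, hj, hjJ']

lemma sum_eVec (J' : Finset ℕ) (hinf : inf ∈ J') : ∑ j ∈ J', eVec inf j = 1 := by
  simp [eVec, hinf]

lemma sum_lamMap_sub_eVec_blowupStratum (hinfK : inf ∉ K) (hJK : J ⊆ K) (hAJ : A ⊆ J)
    (σ : Vec) :
    ∑ j ∈ K \ J ∪ A ∪ {inf}, (lamMap J (K \ J ∪ A ∪ {inf}) inf σ - eVec inf) j
      = ∑ j ∈ K, σ j + ∑ j ∈ A, σ j - 1 := by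
  have hdisj : Disjoint (K \ J) A := Finset.disjoint_of_subset_right hAJ Finset.sdiff_disjoint
  have hinf : inf ∈ K \ J ∪ A ∪ {inf} := by simp
  simp only [Pi.sub_apply, Finset.sum_sub_distrib]
  rw [sum_lamMap _ hinf, sum_eVec _ hinf, erase_blowupStratum hinfK (hAJ.trans hJK),
    Finset.sum_union hdisj, ← Finset.sum_sdiff hJK]
  ring

end BlowupStratum

lemma lamMap_sub_eVec_mem_charΔ (D : PolySys) (J : Finset ℕ) {inf : ℕ} {J' : Finset ℕ}
    (hinf : inf ∈ J') {σ : Vec} (hσ : σ ∈ D.Δ (blowdown J inf J')) :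
    lamMap J J' inf σ - eVec inf ∈ charΔ D J inf J' := by
  rw [charΔ, if_pos hinf]
  exact ⟨_, subset_posHull J' _ ⟨σ, hσ, rfl⟩, rfl⟩

lemma exists_sum_eq_one_pos_of_mem_strictTangent {K : Finset ℕ} {Δ : Set Vec}
    (hΔ : Δ ⊆ suppCone K) {j : ℕ} (hj : j ∈ strictTangent K Δ) :
    ∃ σ ∈ Δ, ∑ i ∈ K, σ i = 1 ∧ 0 < σ j ∧ ∀ i, 0 ≤ σ i := by
  obtain ⟨σ, hσΔ, hσ, hσj⟩ := hj
  have hnonneg := (hΔ hσΔ).1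
  exact ⟨σ, hσΔ, hσ, (hnonneg j).lt_of_ne' hσj, hnonneg⟩

theorem full_tangent_space_resolves_general (D D' : PolySys)
    (J : Finset ℕ) (inf : ℕ) (h : IsCharTransformAt D D' J inf) (J' : Finset ℕ)
    (hJ' : J' ∈ D'.F.H) (hinf : inf ∈ J')
    (hT : strictTangent (blowdown J inf J') (D.Δ (blowdown J inf J')) = (↑J : Set ℕ)) :
    J' ∉ Sing D' := by
  obtain ⟨-, -, hinfI, -, hH, hΔ⟩ := h
  obtain ⟨K, hKH, hJK, A, hAJ, rfl⟩ := exists_blowupH_eq_of_mem hinfI (hH ▸ hJ') hinf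
  have hinfK : inf ∉ K := fun h => hinfI (D.F.mem_sub K hKH h)
  rw [blowdown_blowupStratum hinfK hJK hAJ.subset] at hT
  obtain ⟨j₀, hj₀J, hj₀A⟩ := Finset.exists_of_ssubset hAJ
  obtain ⟨σ, hσΔ, hσK, hσj₀, hσ⟩ := exists_sum_eq_one_pos_of_mem_strictTangent
    (D.char K hKH).subset_suppCone (hT ▸ hj₀J : j₀ ∈ strictTangent K (D.Δ K))
  have hτ := lamMap_sub_eVec_mem_charΔ D J hinf
    ((blowdown_blowupStratum hinfK hJK hAJ.subset).symm ▸ hσΔ)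
  have hA_lt : ∑ j ∈ A, σ j < ∑ j ∈ K, σ j :=
    Finset.sum_lt_sum_of_subset (hAJ.subset.trans hJK) (hJK hj₀J) hj₀A hσj₀ fun i _ _ => hσ i
  rintro ⟨-, hsing⟩
  refine (contactExp_lt_one ⟨inf, hinf⟩ (hΔ _ hJ' ▸ hτ) ?_).not_ge hsing
  rw [sum_lamMap_sub_eVec_blowupStratum hinfK hJK hAJ.subset]
  linarith

/-- If `T(Δ_K) = J` for a stratum `J' ∈ H'_∞` of the blow-up with `K = π_J^#(J')`,
then `J'` is not a singular stratum of the characteristic transform. -/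
theorem full_tangent_space_resolves (D D' : PolySys) (hsp : IsSpecial D)
    (J : Finset ℕ) (inf : ℕ) (h : IsCharTransformAt D D' J inf) (J' : Finset ℕ)
    (hJ' : J' ∈ D'.F.H) (hinf : inf ∈ J')
    (hT : strictTangent (blowdown J inf J') (D.Δ (blowdown J inf J')) = (↑J : Set ℕ)) :
    J' ∉ Sing D' :=
  full_tangent_space_resolves_general D D' J inf h J' hJ' hinf hT

end RedSing
end

section
/- Let D be a special polyhedra system and T ∈ H a stratum with T ∉ Sing(D) that has maximal contact with D. Then every singular stratum of D contains T, and the map Ψ : J ↦ J∖T is a bijection from Sing(D) onto Sing(D^T), where D^T is Hironaka's projection of D from T. -/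
open scoped Pointwise

namespace RedSing

lemma PolySys.Δ_subset_suppCone (D : PolySys) {J : Finset ℕ} (hJ : J ∈ D.F.H) :
    D.Δ J ⊆ suppCone J := by
  obtain ⟨A, hA, hΔ⟩ := D.char J hJ
  rw [hΔ, posHull]
  refine convexHull_min ?_ (suppCone_convex J)
  rintro σ ⟨a, ha, c, hc, rfl⟩
  have ha' := (hA ha).1
  exact ⟨fun j => add_nonneg (ha'.1 j) (hc.1 j),
    fun j hj => by simp [ha'.2 j hj, hc.2 j hj]⟩

lemma one_le_contactExp_iff {J : Finset ℕ} {Δ : Set Vec} (hne : Δ.Nonempty)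
    (hΔ : Δ ⊆ suppCone J) : 1 ≤ contactExp J Δ ↔ ∀ σ ∈ Δ, 1 ≤ ∑ j ∈ J, σ j := by
  unfold contactExp
  split_ifs with hJ
  · subst hJ
    obtain ⟨σ, hσ⟩ := hne
    exact iff_of_false (by norm_num) fun h => by linarith [h σ hσ, Finset.sum_empty (f := σ)]
  · have hbdd : BddBelow ((fun σ => ∑ j ∈ J, σ j) '' Δ) :=
      ⟨0, Set.forall_mem_image.mpr fun σ hσ => Finset.sum_nonneg fun j _ => (hΔ hσ).1 j⟩
    rw [le_csInf_iff hbdd (hne.image _), Set.forall_mem_image]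

lemma PolySys.mem_Sing_iff (D : PolySys) {J : Finset ℕ} (hJ : J ∈ D.F.H) :
    J ∈ Sing D ↔ ∀ σ ∈ D.Δ J, 1 ≤ ∑ j ∈ J, σ j := by
  rw [Sing, Set.mem_ofPred_eq,
    one_le_contactExp_iff (D.nonempty J hJ) (D.Δ_subset_suppCone hJ), and_iff_right hJ]

lemma PolySys.subset_of_mem_Sing_of_hasMaximalContact {D : PolySys} {T J : Finset ℕ}
    (hmc : HasMaximalContact D T) (hJ : J ∈ Sing D) : T ⊆ J := by
  intro t ht
  obtain ⟨σ, hσ, -, hσt⟩ := hmc.2 J hJ (Finset.mem_coe.mpr ht)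
  by_contra htJ
  exact hσt ((D.Δ_subset_suppCone hJ.1 hσ).2 t htJ)

lemma PolySys.exists_sum_lt_one_of_notMem_Sing {D : PolySys} {T J : Finset ℕ}
    (hTH : T ∈ D.F.H) (hTns : T ∉ Sing D) (hJ : J ∈ D.F.H) (hTJ : T ⊆ J) :
    ∃ σ ∈ D.Δ J, ∑ i ∈ T, σ i < 1 := by
  rw [D.mem_Sing_iff hTH] at hTns
  push Not at hTns
  obtain ⟨τ, hτ, hτT⟩ := hTns
  rw [D.compat T hTH J hJ hTJ] at hτ
  obtain ⟨σ, hσ, rfl⟩ := hτ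
  refine ⟨σ, hσ, ?_⟩
  simpa [Finset.sum_ite_mem] using hτT

lemma sum_hironakaProj {T J : Finset ℕ} (hTJ : T ⊆ J) (σ : Vec) :
    ∑ j ∈ J \ T, hironakaProj T J σ j
      = ((∑ j ∈ J, σ j) - ∑ i ∈ T, σ i) / (1 - ∑ i ∈ T, σ i) := by
  rw [← Finset.sum_sdiff_eq_sub hTJ, Finset.sum_div]
  refine Finset.sum_congr rfl fun j hj => ?_
  simp [hironakaProj, hj]

lemma one_le_sum_hironakaProj_iff {T J : Finset ℕ} (hTJ : T ⊆ J) {σ : Vec}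
    (hσT : ∑ i ∈ T, σ i < 1) :
    1 ≤ ∑ j ∈ J \ T, hironakaProj T J σ j ↔ 1 ≤ ∑ j ∈ J, σ j := by
  rw [sum_hironakaProj hTJ, one_le_div (by linarith), sub_le_sub_iff_right]

lemma PolySys.projΔ_subset_suppCone (D : PolySys) {T J' : Finset ℕ} (hH : J' ∪ T ∈ D.F.H) :
    projΔ D T J' ⊆ suppCone J' := by
  rintro _ ⟨σ, ⟨hσ, hσT⟩, rfl⟩
  refine ⟨fun j => ?_, fun j hj => ?_⟩
  · unfold hironakaProj
    split_ifs
    exacts [div_nonneg ((D.Δ_subset_suppCone hH hσ).1 j) (by linarith), le_rfl]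
  · simp [hironakaProj, hj]

/-- Where `Σ_T σ ≥ 1` the bound `|σ|_J ≥ 1` holds anyway, and elsewhere `∇_J^T` preserves it. -/
lemma PolySys.sdiff_mem_projSing_iff {D : PolySys} {T J : Finset ℕ} (hTH : T ∈ D.F.H)
    (hTns : T ∉ Sing D) (hJ : J ∈ D.F.H) (hTJ : T ⊆ J) :
    J \ T ∈ projSing D T ↔ J ∈ Sing D := by
  have hunion : J \ T ∪ T = J := Finset.sdiff_union_of_subset hTJ
  have hproj : projΔ D T (J \ T) =
      hironakaProj T J '' {σ | σ ∈ D.Δ J ∧ ∑ i ∈ T, σ i < 1} := by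
    rw [projΔ, hunion]
  have hne : (projΔ D T (J \ T)).Nonempty := by
    obtain ⟨σ, hσ, hσT⟩ := exists_sum_lt_one_of_notMem_Sing hTH hTns hJ hTJ
    rw [hproj]
    exact ⟨_, σ, ⟨hσ, hσT⟩, rfl⟩
  have hsupp : projΔ D T (J \ T) ⊆ suppCone (J \ T) :=
    D.projΔ_subset_suppCone (by rwa [hunion])
  have hproj_sing : J \ T ∈ projSing D T ↔ ∀ τ ∈ projΔ D T (J \ T), 1 ≤ ∑ j ∈ J \ T, τ j := by
    rw [← one_le_contactExp_iff hne hsupp]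
    exact ⟨fun h => h.2.2, fun h => ⟨⟨J, ⟨hJ, hTJ⟩, rfl⟩, hne, h⟩⟩
  rw [hproj_sing, hproj, Set.forall_mem_image, D.mem_Sing_iff hJ]
  refine ⟨fun h σ hσ => ?_, fun h σ hσ => (one_le_sum_hironakaProj_iff hTJ hσ.2).mpr (h σ hσ.1)⟩
  rcases lt_or_ge (∑ i ∈ T, σ i) 1 with hσT | hσT
  · exact (one_le_sum_hironakaProj_iff hTJ hσT).mp (h ⟨hσ, hσT⟩)
  · exact hσT.trans (Finset.sum_le_sum_of_subset_of_nonneg hTJ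
      fun j _ _ => (D.Δ_subset_suppCone hJ hσ).1 j)

theorem maximal_contact_sing_bijection_general (D : PolySys)
    (T : Finset ℕ) (hTH : T ∈ D.F.H) (hTns : T ∉ Sing D)
    (hmc : HasMaximalContact D T) :
    (∀ J ∈ Sing D, T ⊆ J) ∧
      Set.BijOn (fun J => J \ T) (Sing D) (projSing D T) := by
  have hTJ : ∀ J ∈ Sing D, T ⊆ J := fun J hJ =>
    PolySys.subset_of_mem_Sing_of_hasMaximalContact hmc hJ
  refine ⟨hTJ, fun J hJ => ?_, fun J₁ h₁ J₂ h₂ h => ?_, ?_⟩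
  · exact (PolySys.sdiff_mem_projSing_iff hTH hTns hJ.1 (hTJ J hJ)).mpr hJ
  · rw [← Finset.sdiff_union_of_subset (hTJ J₁ h₁), ← Finset.sdiff_union_of_subset (hTJ J₂ h₂)]
    exact congrArg (· ∪ T) h
  · rintro _ ⟨⟨J, ⟨hJ, hTJ'⟩, rfl⟩, hsing⟩
    exact ⟨J, (PolySys.sdiff_mem_projSing_iff hTH hTns hJ hTJ').mp ⟨⟨J, ⟨hJ, hTJ'⟩, rfl⟩, hsing⟩,
      rfl⟩

/-- If `T ∉ Sing(D)` has maximal contact with the special system `D`, then every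
singular stratum contains `T` and `J ↦ J ∖ T` is a bijection from `Sing(D)` onto
`Sing(D^T)`, the singular locus of Hironaka's projection. -/
theorem maximal_contact_sing_bijection (D : PolySys) (hsp : IsSpecial D)
    (T : Finset ℕ) (hTH : T ∈ D.F.H) (hTns : T ∉ Sing D)
    (hmc : HasMaximalContact D T) :
    (∀ J ∈ Sing D, T ⊆ J) ∧
      Set.BijOn (fun J => J \ T) (Sing D) (projSing D T) :=
  maximal_contact_sing_bijection_general D T hTH hTns hmc

end RedSing
end
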